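/- TSO-LB is strictly stronger than TSO on the store-buffering-style litmus test: taking P = {P1, P2}, A = {x, y, a, b}, V = {0, 1}, and starting from the initial state in which every local and global buffer value is 0, there is no trace of TSO-LB whose subsequence of P1-events is exactly [Write(P1,x,1), Write(P1,a,1), Read(P1,y,0), Read(P1,y,1), Read(P1,b,0)] and whose subsequence of P2-events is exactly [Write(P2,y,1), Write(P2,b,1), Read(P2,x,0), Read(P2,x,1), Read(P2,a,0)]. -/
import Mathlib


namespace TSOLB

/-- A TSO-LB state: local buffers per processor and a global buffer. -/
structure State (P A V : Type) where
  loc : P → A → V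
  glob : A → V

/-- Actions of TSO-LB.  `read` and `write` are the observable labels
`Read(p,a,v)` / `Write(p,a,v)`; `prop p` is the propagate-to-`p` transition,
whose observable label is the silent label τ. -/
inductive Act (P A V : Type) where
  | read  (p : P) (a : A) (v : V)
  | write (p : P) (a : A) (v : V)
  | prop  (p : P)

variable {P A V : Type}

/-- The transition relation of the TSO-LB labelled transition system. -/
inductive Step [DecidableEq P] [DecidableEq A] :
    State P A V → Act P A V → State P A V → Prop where
  | read (q : State P A V) (p : P) (a : A) (v : V) (h : q.loc p a = v) :
      Step q (Act.read p a v) q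
  | write (q : State P A V) (p : P) (a : A) (v : V) :
      Step q (Act.write p a v)
        ⟨Function.update q.loc p (Function.update (q.loc p) a v),
         Function.update q.glob a v⟩
  | prop (q : State P A V) (p : P) :
      Step q (Act.prop p) ⟨Function.update q.loc p q.glob, q.glob⟩

/-- Initial states: every local buffer agrees with the global buffer. -/
def Init (q : State P A V) : Prop := ∀ p a, q.loc p a = q.glob a

/-- A path of transitions with its sequence of actions. -/
inductive Path [DecidableEq P] [DecidableEq A] :
    State P A V → List (Act P A V) → State P A V → Prop where
  | nil (q : State P A V) : Path q [] q
  | cons {q q' qf : State P A V} {l : Act P A V} {T : List (Act P A V)} :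
      Step q l q' → Path q' T qf → Path q (l :: T) qf

/-- A trace: a sequence of actions arising from a path starting at an initial state. -/
def IsTrace [DecidableEq P] [DecidableEq A] (T : List (Act P A V)) : Prop :=
  ∃ q0 qf : State P A V, Init q0 ∧ Path q0 T qf

/- Events of a trace are the occurrences in it, identified by their index. -/

/-- Event `i` is a write event. -/
def IsWriteAt (T : List (Act P A V)) (i : ℕ) : Prop :=
  ∃ p a v, T[i]? = some (Act.write p a v)

/-- Event `i` is a read event. -/
def IsReadAt (T : List (Act P A V)) (i : ℕ) : Prop :=
  ∃ p a v, T[i]? = some (Act.read p a v)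

/-- Event `i` is a read or write event. -/
def IsRW (T : List (Act P A V)) (i : ℕ) : Prop := IsWriteAt T i ∨ IsReadAt T i

/-- Event `i` is a read or write event of processor `p`. -/
def EvtOf (T : List (Act P A V)) (p : P) (i : ℕ) : Prop :=
  (∃ a v, T[i]? = some (Act.read p a v)) ∨ (∃ a v, T[i]? = some (Act.write p a v))

/-- Event `i` is a read or write event to address `a`. -/
def EvtAddr (T : List (Act P A V)) (a : A) (i : ℕ) : Prop :=
  (∃ p v, T[i]? = some (Act.read p a v)) ∨ (∃ p v, T[i]? = some (Act.write p a v))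

/-- Event `i` is a write to address `a`. -/
def WriteTo (T : List (Act P A V)) (a : A) (i : ℕ) : Prop :=
  ∃ p v, T[i]? = some (Act.write p a v)

/-- Event `k` is a write by `p` to `a` or a propagate to `p`. -/
def Src (T : List (Act P A V)) (p : P) (a : A) (k : ℕ) : Prop :=
  (∃ v, T[k]? = some (Act.write p a v)) ∨ T[k]? = some (Act.prop p)

/-- `e` is the latest event before position `r` that is a write by `p` to `a`
or a propagate to `p`. -/
def LatestSrcBefore (T : List (Act P A V)) (p : P) (a : A) (e r : ℕ) : Prop :=
  e < r ∧ Src T p a e ∧ ∀ k, e < k → k < r → ¬ Src T p a k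

/-- `w` is the latest write to `a` before position `e`. -/
def LatestWriteBefore (T : List (Act P A V)) (a : A) (w e : ℕ) : Prop :=
  w < e ∧ WriteTo T a w ∧ ∀ k, w < k → k < e → ¬ WriteTo T a k

/-- Coherence order: writes to the same address, in trace order. -/
def co (T : List (Act P A V)) (i j : ℕ) : Prop :=
  i < j ∧ ∃ a, WriteTo T a i ∧ WriteTo T a j

/-- Reads-from: the read at `r` reads its value from the write at `w`, i.e. letting
`e` be the latest event before `r` that is a write by the reader to the read address
or a propagate to the reader, either `w = e`, or `e` is a propagate and `w` is the
latest write to that address before `e`. -/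
def ReadsFrom (T : List (Act P A V)) (w r : ℕ) : Prop :=
  ∃ q a v, T[r]? = some (Act.read q a v) ∧ (∃ p, T[w]? = some (Act.write p a v)) ∧
    ∃ e, LatestSrcBefore T q a e r ∧
      (w = e ∨ (T[e]? = some (Act.prop q) ∧ LatestWriteBefore T a w e))

/-- The reads-from relation `rf`. -/
def rf (T : List (Act P A V)) (w r : ℕ) : Prop := ReadsFrom T w r

/-- Program order: read/write events of the same processor in trace order. -/
def po (T : List (Act P A V)) (i j : ℕ) : Prop :=
  i < j ∧ ∃ p, EvtOf T p i ∧ EvtOf T p j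

/-- `po-loc`: program order restricted to pairs of events with the same address. -/
def poloc (T : List (Act P A V)) (i j : ℕ) : Prop :=
  po T i j ∧ ∃ a, EvtAddr T a i ∧ EvtAddr T a j

/-- Preserved program order: `po` minus write-before-read pairs. -/
def ppo (T : List (Act P A V)) (i j : ℕ) : Prop :=
  po T i j ∧ ¬ (IsWriteAt T i ∧ IsReadAt T j)

/-- From-read: `fr := rf⁻¹ ; co`. -/
def fr (T : List (Act P A V)) (i j : ℕ) : Prop :=
  ∃ w, rf T w i ∧ co T w j

/-- The two events are from distinct processors. -/
def Ext (T : List (Act P A V)) (i j : ℕ) : Prop :=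
  ∃ p q, p ≠ q ∧ EvtOf T p i ∧ EvtOf T q j

/-- External reads-from: `rf` restricted to distinct processors. -/
def rfe (T : List (Act P A V)) (i j : ℕ) : Prop := rf T i j ∧ Ext T i j

/-- External from-read: `fr` restricted to distinct processors. -/
def fre (T : List (Act P A V)) (i j : ℕ) : Prop := fr T i j ∧ Ext T i j

/-- Communication order: `com := co ∪ rf ∪ fr`. -/
def com (T : List (Act P A V)) (i j : ℕ) : Prop :=
  co T i j ∨ rf T i j ∨ fr T i j

/-- Happens-before (TSO, no fences): `hb := ppo ∪ rfe`. -/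
def hb (T : List (Act P A V)) (i j : ℕ) : Prop := ppo T i j ∨ rfe T i j

/-- Propagation order (TSO, no fences): `prop := ppo ∪ rfe ∪ fr`. -/
def propRel (T : List (Act P A V)) (i j : ℕ) : Prop :=
  ppo T i j ∨ rfe T i j ∨ fr T i j

/-- A relation is acyclic iff its transitive closure is irreflexive. -/
def Acyclic {α : Type*} (r : α → α → Prop) : Prop :=
  Irreflexive (Relation.TransGen r)

/-- Strict order on optional positions: `none` (no anchor) comes first. -/
def OLt : Option ℕ → Option ℕ → Prop
  | none, some _ => True
  | some m, some n => m < n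
  | _, _ => False

/-- The anchor of a read/write event used to define the logical-time order `L`:
a write is anchored at itself; a read is anchored at the latest earlier event
that is a write by the reader to the read address or a propagate to the reader
(`none` if there is no such event, placing the read at the start of `L`). -/
def AnchorOf (T : List (Act P A V)) (i : ℕ) (o : Option ℕ) : Prop :=
  (IsWriteAt T i ∧ o = some i) ∨
  (∃ p a v, T[i]? = some (Act.read p a v) ∧
    ((o = none ∧ ∀ k, k < i → ¬ Src T p a k) ∨
     (∃ e, o = some e ∧ LatestSrcBefore T p a e i)))

/-- The logical-time order `L` on read/write events: writes in trace order; each read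
placed immediately after its anchor (reads with no anchor at the start); events
placed at the same point ordered by trace order. -/
def L (T : List (Act P A V)) (i j : ℕ) : Prop :=
  ∃ oi oj, AnchorOf T i oi ∧ AnchorOf T j oj ∧
    (OLt oi oj ∨ (oi = oj ∧ i < j))

/-- The two processors of the litmus test. -/
inductive Proc2 where
  | P1 | P2
deriving DecidableEq

/-- The four addresses of the litmus test. -/
inductive Addr4 where
  | x | y | a | b
deriving DecidableEq

instance : Fintype Proc2 :=
  ⟨{Proc2.P1, Proc2.P2}, by intro p; cases p <;> simp⟩

instance : Fintype Addr4 :=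
  ⟨{Addr4.x, Addr4.y, Addr4.a, Addr4.b}, by intro ad; cases ad <;> simp⟩

/-- The subsequence of `p`-events of a trace: its reads and writes by `p`,
in trace order. -/
def pEvents (p : Proc2) (T : List (Act Proc2 Addr4 (Fin 2))) :
    List (Act Proc2 Addr4 (Fin 2)) :=
  T.filter (fun e =>
    match e with
    | Act.read p' _ _ => decide (p' = p)
    | Act.write p' _ _ => decide (p' = p)
    | Act.prop _ => false)

/-- The initial state of the litmus test: every local and global buffer value is 0. -/
def initState : State Proc2 Addr4 (Fin 2) := ⟨fun _ _ => 0, fun _ => 0⟩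

/-! Auxiliary machinery for the litmus-test impossibility proof. -/

@[simp] lemma pEvents_nil (p : Proc2) : pEvents p [] = [] := rfl

lemma pEvents_cons_read (p p' : Proc2) (a : Addr4) (v : Fin 2)
    (T : List (Act Proc2 Addr4 (Fin 2))) :
    pEvents p (Act.read p' a v :: T) =
      if p' = p then Act.read p' a v :: pEvents p T else pEvents p T := by
  by_cases h : p' = p <;> simp [pEvents, List.filter_cons, h]

lemma pEvents_cons_write (p p' : Proc2) (a : Addr4) (v : Fin 2)
    (T : List (Act Proc2 Addr4 (Fin 2))) :
    pEvents p (Act.write p' a v :: T) =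
      if p' = p then Act.write p' a v :: pEvents p T else pEvents p T := by
  by_cases h : p' = p <;> simp [pEvents, List.filter_cons, h]

lemma pEvents_cons_prop (p p' : Proc2) (T : List (Act Proc2 Addr4 (Fin 2))) :
    pEvents p (Act.prop p' :: T) = pEvents p T := by
  simp [pEvents, List.filter_cons]

@[simp] lemma loc_mk (u : Proc2 → Addr4 → Fin 2) (g : Addr4 → Fin 2) :
    (⟨u, g⟩ : State Proc2 Addr4 (Fin 2)).loc = u := rfl

@[simp] lemma glob_mk (u : Proc2 → Addr4 → Fin 2) (g : Addr4 → Fin 2) :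
    (⟨u, g⟩ : State Proc2 Addr4 (Fin 2)).glob = g := rfl

/-- The prescribed P1 event list. -/
def LL1 : List (Act Proc2 Addr4 (Fin 2)) :=
  [Act.write Proc2.P1 Addr4.x 1, Act.write Proc2.P1 Addr4.a 1,
   Act.read Proc2.P1 Addr4.y 0, Act.read Proc2.P1 Addr4.y 1,
   Act.read Proc2.P1 Addr4.b 0]

/-- The prescribed P2 event list. -/
def LL2 : List (Act Proc2 Addr4 (Fin 2)) :=
  [Act.write Proc2.P2 Addr4.y 1, Act.write Proc2.P2 Addr4.b 1,
   Act.read Proc2.P2 Addr4.x 0, Act.read Proc2.P2 Addr4.x 1,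
   Act.read Proc2.P2 Addr4.a 0]

/-- Invariant carried along the trace: `i`/`j` count consumed P1/P2 events,
`f1` records that a moment with `3 ≤ i ∧ j ≤ 1` has occurred (a propagate to P1
after `Read(P1,y,0)` but before `Write(P2,b,1)`), and `f2` symmetrically. -/
def Inv (i j : ℕ) (q : State Proc2 Addr4 (Fin 2)) (f1 f2 : Bool) : Prop :=
  q.glob Addr4.x = (if 1 ≤ i then 1 else 0) ∧
  q.glob Addr4.a = (if 2 ≤ i then 1 else 0) ∧
  q.glob Addr4.y = (if 1 ≤ j then 1 else 0) ∧
  q.glob Addr4.b = (if 2 ≤ j then 1 else 0) ∧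
  (3 ≤ i → q.loc Proc2.P1 Addr4.y = 1 → (f1 = true ∨ q.loc Proc2.P1 Addr4.b = 1)) ∧
  (4 ≤ i → (f1 = true ∨ q.loc Proc2.P1 Addr4.b = 1)) ∧
  (5 ≤ i → f1 = true) ∧
  (q.loc Proc2.P1 Addr4.b = 1 → 2 ≤ j) ∧
  (3 ≤ j → q.loc Proc2.P2 Addr4.x = 1 → (f2 = true ∨ q.loc Proc2.P2 Addr4.a = 1)) ∧
  (4 ≤ j → (f2 = true ∨ q.loc Proc2.P2 Addr4.a = 1)) ∧
  (5 ≤ j → f2 = true) ∧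
  (q.loc Proc2.P2 Addr4.a = 1 → 2 ≤ i) ∧
  (f1 = true → 3 ≤ i) ∧
  (f2 = true → 3 ≤ j) ∧
  ¬(f1 = true ∧ f2 = true)

lemma key (T : List (Act Proc2 Addr4 (Fin 2))) :
    ∀ (q qf : State Proc2 Addr4 (Fin 2)) (i j : ℕ) (f1 f2 : Bool),
    Path q T qf →
    pEvents Proc2.P1 T = LL1.drop i →
    pEvents Proc2.P2 T = LL2.drop j →
    Inv i j q f1 f2 → False := by
  induction T with
  | nil =>
    intro q qf i j f1 f2 hp h1 h2 hinv
    obtain ⟨-, -, -, -, -, -, e1, -, -, -, e2, -, -, -, c⟩ := hinv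
    have hi : 5 ≤ i := by
      by_contra h
      interval_cases i <;> simp [LL1] at h1
    have hj : 5 ≤ j := by
      by_contra h
      interval_cases j <;> simp [LL2] at h2
    exact c ⟨e1 hi, e2 hj⟩
  | cons l T ih =>
    intro q qf i j f1 f2 hp h1 h2 hinv
    obtain ⟨g1, g2, g3, g4, y1, y1', e1, d1, y2, y2', e2, d2, c1, c2, c⟩ := hinv
    cases hp with
    | cons hs hp' =>
    cases hs with
    | read p a v hv =>
      cases p with
      | P1 =>
        rw [pEvents_cons_read, if_pos rfl] at h1
        rw [pEvents_cons_read, if_neg (by decide)] at h2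
        rcases i with _ | _ | _ | _ | _ | i
        · simp [LL1] at h1
        · simp [LL1] at h1
        · -- read P1 y 0
          simp only [LL1, List.drop, List.cons.injEq, Act.read.injEq] at h1
          obtain ⟨⟨-, ha, hv0⟩, hrest⟩ := h1
          subst ha; subst hv0
          refine ih q qf 3 j f1 f2 hp' (by simpa [LL1] using hrest) h2
            ⟨by simpa using g1, by simpa using g2, g3, g4, ?_,
             fun h => absurd h (by omega), fun h => absurd h (by omega),
             d1, y2, y2', e2, fun _ => by omega, fun _ => by omega, c2, c⟩
          intro _ hy; rw [hv] at hy; exact absurd hy (by decide)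
        · -- read P1 y 1
          simp only [LL1, List.drop, List.cons.injEq, Act.read.injEq] at h1
          obtain ⟨⟨-, ha, hv1⟩, hrest⟩ := h1
          subst ha; subst hv1
          refine ih q qf 4 j f1 f2 hp' (by simpa [LL1] using hrest) h2
            ⟨by simpa using g1, by simpa using g2, g3, g4,
             fun _ => y1 (by omega), fun _ => y1 (by omega) hv,
             fun h => absurd h (by omega), d1, y2, y2', e2,
             fun _ => by omega, fun _ => by omega, c2, c⟩
        · -- read P1 b 0
          simp only [LL1, List.drop, List.cons.injEq, Act.read.injEq] at h1
          obtain ⟨⟨-, ha, hv0⟩, hrest⟩ := h1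
          subst ha; subst hv0
          have hf1 : f1 = true := by
            rcases y1' (by omega) with h | h
            · exact h
            · rw [hv] at h; exact absurd h (by decide)
          refine ih q qf 5 j f1 f2 hp' (by simpa [LL1] using hrest) h2
            ⟨by simpa using g1, by simpa using g2, g3, g4,
             fun _ _ => Or.inl hf1, fun _ => Or.inl hf1, fun _ => hf1, d1, y2, y2', e2,
             fun _ => by omega, fun _ => by omega, c2, c⟩
        · simp [LL1, List.drop] at h1
      | P2 =>
        rw [pEvents_cons_read, if_neg (by decide)] at h1
        rw [pEvents_cons_read, if_pos rfl] at h2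
        rcases j with _ | _ | _ | _ | _ | j
        · simp [LL2] at h2
        · simp [LL2] at h2
        · -- read P2 x 0
          simp only [LL2, List.drop, List.cons.injEq, Act.read.injEq] at h2
          obtain ⟨⟨-, ha, hv0⟩, hrest⟩ := h2
          subst ha; subst hv0
          refine ih q qf i 3 f1 f2 hp' h1 (by simpa [LL2] using hrest)
            ⟨g1, g2, by simpa using g3, by simpa using g4, y1, y1', e1,
             fun _ => by omega, ?_, fun h => absurd h (by omega),
             fun h => absurd h (by omega), d2, c1, fun _ => by omega, c⟩
          intro _ hx; rw [hv] at hx; exact absurd hx (by decide)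
        · -- read P2 x 1
          simp only [LL2, List.drop, List.cons.injEq, Act.read.injEq] at h2
          obtain ⟨⟨-, ha, hv1⟩, hrest⟩ := h2
          subst ha; subst hv1
          refine ih q qf i 4 f1 f2 hp' h1 (by simpa [LL2] using hrest)
            ⟨g1, g2, by simpa using g3, by simpa using g4, y1, y1', e1,
             fun _ => by omega, fun _ => y2 (by omega), fun _ => y2 (by omega) hv,
             fun h => absurd h (by omega), d2, c1, fun _ => by omega, c⟩
        · -- read P2 a 0
          simp only [LL2, List.drop, List.cons.injEq, Act.read.injEq] at h2
          obtain ⟨⟨-, ha, hv0⟩, hrest⟩ := h2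
          subst ha; subst hv0
          have hf2 : f2 = true := by
            rcases y2' (by omega) with h | h
            · exact h
            · rw [hv] at h; exact absurd h (by decide)
          refine ih q qf i 5 f1 f2 hp' h1 (by simpa [LL2] using hrest)
            ⟨g1, g2, by simpa using g3, by simpa using g4, y1, y1', e1,
             fun _ => by omega, fun _ _ => Or.inl hf2, fun _ => Or.inl hf2,
             fun _ => hf2, d2, c1, fun _ => by omega, c⟩
        · simp [LL2, List.drop] at h2
    | write p a v =>
      cases p with
      | P1 =>
        rw [pEvents_cons_write, if_pos rfl] at h1
        rw [pEvents_cons_write, if_neg (by decide)] at h2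
        rcases i with _ | _ | _ | _ | _ | i
        · -- write P1 x 1
          simp only [LL1, List.drop, List.cons.injEq, Act.write.injEq] at h1
          obtain ⟨⟨-, ha, hv1⟩, hrest⟩ := h1
          subst ha; subst hv1
          refine ih _ qf 1 j f1 f2 hp' (by simpa [LL1] using hrest) h2 ?_
          refine ⟨?_, ?_, ?_, ?_, fun h => absurd h (by omega),
            fun h => absurd h (by omega), fun h => absurd h (by omega),
            ?_, ?_, ?_, e2, ?_, fun h => absurd (c1 h) (by omega), c2, c⟩
          · simp [Function.update_apply]
          · simpa [Function.update_apply] using g2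
          · simpa [Function.update_apply] using g3
          · simpa [Function.update_apply] using g4
          · intro h; simp [Function.update_apply] at h; exact d1 h
          · intro h3 hx; simp [Function.update_apply] at hx ⊢; exact y2 h3 hx
          · intro h4; simpa [Function.update_apply] using y2' h4
          · intro h; simp [Function.update_apply] at h; exact absurd (d2 h) (by omega)
        · -- write P1 a 1
          simp only [LL1, List.drop, List.cons.injEq, Act.write.injEq] at h1
          obtain ⟨⟨-, ha, hv1⟩, hrest⟩ := h1
          subst ha; subst hv1
          refine ih _ qf 2 j f1 f2 hp' (by simpa [LL1] using hrest) h2 ?_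
          refine ⟨?_, ?_, ?_, ?_, fun h => absurd h (by omega),
            fun h => absurd h (by omega), fun h => absurd h (by omega),
            ?_, ?_, ?_, e2, fun _ => by omega, fun h => absurd (c1 h) (by omega), c2, c⟩
          · simpa [Function.update_apply] using g1
          · simp [Function.update_apply]
          · simpa [Function.update_apply] using g3
          · simpa [Function.update_apply] using g4
          · intro h; simp [Function.update_apply] at h; exact d1 h
          · intro h3 hx; simp [Function.update_apply] at hx ⊢; exact y2 h3 hx
          · intro h4; simpa [Function.update_apply] using y2' h4
        · simp [LL1, List.drop] at h1
        · simp [LL1, List.drop] at h1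
        · simp [LL1, List.drop] at h1
        · simp [LL1, List.drop] at h1
      | P2 =>
        rw [pEvents_cons_write, if_neg (by decide)] at h1
        rw [pEvents_cons_write, if_pos rfl] at h2
        rcases j with _ | _ | _ | _ | _ | j
        · -- write P2 y 1
          simp only [LL2, List.drop, List.cons.injEq, Act.write.injEq] at h2
          obtain ⟨⟨-, ha, hv1⟩, hrest⟩ := h2
          subst ha; subst hv1
          refine ih _ qf i 1 f1 f2 hp' h1 (by simpa [LL2] using hrest) ?_
          refine ⟨?_, ?_, ?_, ?_, ?_, ?_, e1, ?_, fun h => absurd h (by omega),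
            fun h => absurd h (by omega), fun h => absurd h (by omega), ?_, c1,
            fun h => absurd (c2 h) (by omega), c⟩
          · simpa [Function.update_apply] using g1
          · simpa [Function.update_apply] using g2
          · simp [Function.update_apply]
          · simpa [Function.update_apply] using g4
          · intro h3 hy; simp [Function.update_apply] at hy ⊢; exact y1 h3 hy
          · intro h4; simpa [Function.update_apply] using y1' h4
          · intro h; simp [Function.update_apply] at h; exact absurd (d1 h) (by omega)
          · intro h; simp [Function.update_apply] at h; exact d2 h
        · -- write P2 b 1
          simp only [LL2, List.drop, List.cons.injEq, Act.write.injEq] at h2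
          obtain ⟨⟨-, ha, hv1⟩, hrest⟩ := h2
          subst ha; subst hv1
          refine ih _ qf i 2 f1 f2 hp' h1 (by simpa [LL2] using hrest) ?_
          refine ⟨?_, ?_, ?_, ?_, ?_, ?_, e1, fun _ => by omega,
            fun h => absurd h (by omega), fun h => absurd h (by omega),
            fun h => absurd h (by omega), ?_, c1,
            fun h => absurd (c2 h) (by omega), c⟩
          · simpa [Function.update_apply] using g1
          · simpa [Function.update_apply] using g2
          · simpa [Function.update_apply] using g3
          · simp [Function.update_apply]
          · intro h3 hy; simp [Function.update_apply] at hy ⊢; exact y1 h3 hy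
          · intro h4; simpa [Function.update_apply] using y1' h4
          · intro h; simp [Function.update_apply] at h; exact d2 h
        · simp [LL2, List.drop] at h2
        · simp [LL2, List.drop] at h2
        · simp [LL2, List.drop] at h2
        · simp [LL2, List.drop] at h2
    | prop p =>
      rw [pEvents_cons_prop] at h1 h2
      cases p with
      | P1 =>
        have hL2 : ∀ ad, Function.update q.loc Proc2.P1 q.glob Proc2.P2 ad
            = q.loc Proc2.P2 ad := fun ad => by
          rw [Function.update_of_ne (by decide)]
        refine ih _ qf i j (f1 || (decide (3 ≤ i) && decide (j ≤ 1))) f2 hp' h1 h2 ?_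
        refine ⟨g1, g2, g3, g4, ?_, ?_, ?_, ?_, ?_, ?_, e2, ?_, ?_, c2, ?_⟩
        · -- Y1
          intro hi3 hy
          simp only [loc_mk, glob_mk, Function.update_self] at hy ⊢
          rw [g3] at hy
          rcases Nat.lt_or_ge j 2 with hj | hj
          · rcases Nat.lt_or_ge j 1 with hj0 | hj1
            · rw [if_neg (by omega)] at hy; exact absurd hy (by decide)
            · left
              simp only [Bool.or_eq_true, Bool.and_eq_true, decide_eq_true_eq]
              exact Or.inr ⟨hi3, by omega⟩
          · right; rw [g4, if_pos hj]
        · -- Y1'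
          intro hi4
          simp only [loc_mk, Function.update_self]
          rcases y1' hi4 with h | h
          · exact Or.inl (by simp [h])
          · right; rw [g4, if_pos (d1 h)]
        · -- E1
          intro h5; simp [e1 h5]
        · -- D1
          simp only [loc_mk, Function.update_self]
          intro h; rw [g4] at h
          rcases Nat.lt_or_ge j 2 with hj | hj
          · rw [if_neg (by omega)] at h; exact absurd h (by decide)
          · exact hj
        · -- Y2
          intro h3 hx
          simp only [loc_mk, hL2] at hx ⊢
          exact y2 h3 hx
        · intro h4; simpa only [loc_mk, hL2] using y2' h4
        · simp only [loc_mk, hL2]; exact d2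
        · -- C1
          intro h
          simp only [Bool.or_eq_true, Bool.and_eq_true, decide_eq_true_eq] at h
          rcases h with h | ⟨h, -⟩
          · exact c1 h
          · exact h
        · -- C
          rintro ⟨hf1, hf2⟩
          simp only [Bool.or_eq_true, Bool.and_eq_true, decide_eq_true_eq] at hf1
          rcases hf1 with h | ⟨-, hj⟩
          · exact c ⟨h, hf2⟩
          · exact absurd (c2 hf2) (by omega)
      | P2 =>
        have hL1 : ∀ ad, Function.update q.loc Proc2.P2 q.glob Proc2.P1 ad
            = q.loc Proc2.P1 ad := fun ad => by
          rw [Function.update_of_ne (by decide)]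
        refine ih _ qf i j f1 (f2 || (decide (3 ≤ j) && decide (i ≤ 1))) hp' h1 h2 ?_
        refine ⟨g1, g2, g3, g4, ?_, ?_, e1, ?_, ?_, ?_, ?_, ?_, c1, ?_, ?_⟩
        · -- Y1
          intro h3 hy
          simp only [loc_mk, hL1] at hy ⊢
          exact y1 h3 hy
        · intro h4; simpa only [loc_mk, hL1] using y1' h4
        · simp only [loc_mk, hL1]; exact d1
        · -- Y2
          intro hj3 hx
          simp only [loc_mk, glob_mk, Function.update_self] at hx ⊢
          rw [g1] at hx
          rcases Nat.lt_or_ge i 2 with hi | hi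
          · rcases Nat.lt_or_ge i 1 with hi0 | hi1
            · rw [if_neg (by omega)] at hx; exact absurd hx (by decide)
            · left
              simp only [Bool.or_eq_true, Bool.and_eq_true, decide_eq_true_eq]
              exact Or.inr ⟨hj3, by omega⟩
          · right; rw [g2, if_pos hi]
        · -- Y2'
          intro hj4
          simp only [loc_mk, Function.update_self]
          rcases y2' hj4 with h | h
          · exact Or.inl (by simp [h])
          · right; rw [g2, if_pos (d2 h)]
        · -- E2
          intro h5; simp [e2 h5]
        · -- D2
          simp only [loc_mk, Function.update_self]
          intro h; rw [g2] at h
          rcases Nat.lt_or_ge i 2 with hi | hi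
          · rw [if_neg (by omega)] at h; exact absurd h (by decide)
          · exact hi
        · -- C2
          intro h
          simp only [Bool.or_eq_true, Bool.and_eq_true, decide_eq_true_eq] at h
          rcases h with h | ⟨h, -⟩
          · exact c2 h
          · exact h
        · -- C
          rintro ⟨hf1, hf2⟩
          simp only [Bool.or_eq_true, Bool.and_eq_true, decide_eq_true_eq] at hf2
          rcases hf2 with h | ⟨-, hi⟩
          · exact c ⟨hf1, h⟩
          · exact absurd (c1 hf1) (by omega)

/-- TSO-LB is strictly stronger than TSO on the store-buffering-style
litmus test: starting from the all-zero initial state, there is no trace of TSO-LB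
whose subsequence of P1-events is exactly
`[Write(P1,x,1), Write(P1,a,1), Read(P1,y,0), Read(P1,y,1), Read(P1,b,0)]` and whose
subsequence of P2-events is exactly
`[Write(P2,y,1), Write(P2,b,1), Read(P2,x,0), Read(P2,x,1), Read(P2,a,0)]`. -/
theorem tsolb_forbids_sb_litmus :
    ¬ ∃ (T : List (Act Proc2 Addr4 (Fin 2))) (qf : State Proc2 Addr4 (Fin 2)),
        Path initState T qf ∧
        pEvents Proc2.P1 T =
          [Act.write Proc2.P1 Addr4.x 1, Act.write Proc2.P1 Addr4.a 1,
           Act.read Proc2.P1 Addr4.y 0, Act.read Proc2.P1 Addr4.y 1,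
           Act.read Proc2.P1 Addr4.b 0] ∧
        pEvents Proc2.P2 T =
          [Act.write Proc2.P2 Addr4.y 1, Act.write Proc2.P2 Addr4.b 1,
           Act.read Proc2.P2 Addr4.x 0, Act.read Proc2.P2 Addr4.x 1,
           Act.read Proc2.P2 Addr4.a 0] := by
  rintro ⟨T, qf, hp, h1, h2⟩
  refine key T initState qf 0 0 false false hp (by simpa [LL1] using h1)
    (by simpa [LL2] using h2) ?_
  refine ⟨rfl, rfl, rfl, rfl, fun h => absurd h (by omega), fun h => absurd h (by omega),
    fun h => absurd h (by omega), fun h => absurd h (by decide),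
    fun h => absurd h (by omega), fun h => absurd h (by omega),
    fun h => absurd h (by omega), fun h => absurd h (by decide),
    fun h => by simp at h, fun h => by simp at h, by simp⟩

end TSOLB
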